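/- arXiv:1307.7546 — 8 statements merged into one kernel-verified Lean document; each statement's English description precedes it below -/
import Mathlib

section
/- Let (U,V) be a pair of random variables on a probability space (Ω, 𝓕, P), each uniformly distributed on [0,1] (representing a copula C), and let γ ∈ [0,1]. Then the following are equivalent: (i) for all G1, G2 ∈ 𝒢 with G1 ⪯st G2 one has P(G1⁻¹(U) ≤ G2⁻¹(V)) ≥ γ; (ii) P(U ≤ V) ≥ γ. (That is, C belongs to the class 𝓛_γ if and only if η(C) := P(U ≤ V) ≥ γ.) -/
open MeasureTheory Set

noncomputable section

/-- A cumulative distribution function on ℝ. -/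
def IsCDF (G : ℝ → ℝ) : Prop :=
  Monotone G ∧ (∀ x, ContinuousWithinAt G (Ici x) x) ∧
    Filter.Tendsto G Filter.atBot (nhds 0) ∧ Filter.Tendsto G Filter.atTop (nhds 1)

/-- The class 𝒢: CDFs that are continuous and strictly increasing where 0 < G < 1. -/
def MemG (G : ℝ → ℝ) : Prop :=
  IsCDF G ∧ Continuous G ∧ StrictMonoOn G {x | 0 < G x ∧ G x < 1}

/-- Generalized inverse (quantile function). -/
def Ginv (G : ℝ → ℝ) (u : ℝ) : ℝ := sInf {x | u ≤ G x}

/-- Usual stochastic ordering between CDFs: G1 ⪯st G2 iff G2 ≤ G1 pointwise. -/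
def StOrd (G1 G2 : ℝ → ℝ) : Prop := ∀ t, G2 t ≤ G1 t

/-- A random variable uniformly distributed on [0,1]. -/
def IsUniform01 {Ω : Type*} [MeasurableSpace Ω] (P : Measure Ω) (U : Ω → ℝ) : Prop :=
  Measurable U ∧ Measure.map U P = volume.restrict (Icc 0 1)

/-!
If `G1 ⪯st G2` then `G1⁻¹ u ≤ G2⁻¹ v` whenever `0 < u ≤ v < 1`, so `{U ≤ V}` is contained in
`{G1⁻¹ U ≤ G2⁻¹ V}` up to the null event that `U` or `V` hits `{0, 1}`; this gives `η(C) ≤ η(C,G1,G2)`.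
Conversely, for `G1 = G2` the uniform CDF on `[0,1]`, whose quantile function is the identity on
`(0,1]`, the two events agree almost surely.
-/

lemma ginv_le_ginv_of_stOrd {G1 G2 : ℝ → ℝ} (h1 : IsCDF G1) (h2 : IsCDF G2)
    (hord : StOrd G1 G2) {u v : ℝ} (hu : 0 < u) (hv : v < 1) (huv : u ≤ v) :
    Ginv G1 u ≤ Ginv G2 v := by
  have hne : {x | v ≤ G2 x}.Nonempty := by
    obtain ⟨x, hx⟩ := (h2.2.2.2.eventually (eventually_gt_nhds hv)).exists
    exact ⟨x, hx.le⟩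
  have hbdd : BddBelow {x | u ≤ G1 x} := by
    obtain ⟨t, ht⟩ := (h1.2.2.1.eventually (eventually_lt_nhds hu)).exists
    exact ⟨t, fun x hx => le_of_not_gt fun hxt => (h1.1 hxt.le).not_gt (ht.trans_le hx)⟩
  exact csInf_le_csInf hbdd hne fun x hx => (huv.trans hx).trans (hord x)

def uniformCDF (x : ℝ) : ℝ := min (max x 0) 1

lemma uniformCDF_of_mem_Icc {x : ℝ} (hx : x ∈ Icc (0 : ℝ) 1) : uniformCDF x = x := by
  simp [uniformCDF, hx.1, hx.2]

lemma mem_Ioo_of_uniformCDF_mem_Ioo {x : ℝ} (hx : uniformCDF x ∈ Ioo (0 : ℝ) 1) :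
    x ∈ Ioo (0 : ℝ) 1 := by
  simpa [uniformCDF] using hx

lemma memG_uniformCDF : MemG uniformCDF := by
  have hmono : Monotone uniformCDF := fun a b h => min_le_min (max_le_max h le_rfl) le_rfl
  have hcont : Continuous uniformCDF := (continuous_id.max continuous_const).min continuous_const
  refine ⟨⟨hmono, fun x => hcont.continuousWithinAt, ?_, ?_⟩, hcont, ?_⟩
  · refine tendsto_const_nhds.congr' ?_
    filter_upwards [Filter.eventually_le_atBot (0 : ℝ)] with x hx
    simp [uniformCDF, hx]
  · refine tendsto_const_nhds.congr' ?_
    filter_upwards [Filter.eventually_ge_atTop (1 : ℝ)] with x hx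
    simp [uniformCDF, le_max_of_le_left hx]
  · intro a ha b hb hab
    have ha' := Ioo_subset_Icc_self (mem_Ioo_of_uniformCDF_mem_Ioo ha)
    have hb' := Ioo_subset_Icc_self (mem_Ioo_of_uniformCDF_mem_Ioo hb)
    rwa [uniformCDF_of_mem_Icc ha', uniformCDF_of_mem_Icc hb']

lemma ginv_uniformCDF {u : ℝ} (hu : u ∈ Ioc (0 : ℝ) 1) : Ginv uniformCDF u = u := by
  have hset : {x | u ≤ uniformCDF x} = Ici u := by
    ext x
    simp only [uniformCDF, mem_ofPred_eq, mem_Ici, le_min_iff, le_max_iff, hu.2, and_true]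
    exact or_iff_left fun h => (hu.1.trans_le h).false
  rw [Ginv, hset, csInf_Ici]

lemma ae_mem_Ioo_of_isUniform01 {Ω : Type*} [MeasurableSpace Ω] {P : Measure Ω} {U : Ω → ℝ}
    (hU : IsUniform01 P U) : ∀ᵐ ω ∂P, U ω ∈ Ioo (0 : ℝ) 1 := by
  have hIoo : ∀ᵐ x ∂volume.restrict (Icc (0 : ℝ) 1), x ∈ Ioo (0 : ℝ) 1 := by
    rw [ae_restrict_iff' measurableSet_Icc]
    filter_upwards [Ioo_ae_eq_Icc (a := (0 : ℝ)) (b := 1)] with x hx hxIcc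
    exact hx.mpr hxIcc
  rw [← hU.2] at hIoo
  exact ae_of_ae_map hU.1.aemeasurable hIoo

theorem stmt4_general {Ω : Type*} [MeasurableSpace Ω] (P : Measure Ω)
    (U V : Ω → ℝ) (hU : IsUniform01 P U) (hV : IsUniform01 P V)
    (γ : ℝ) :
    (∀ G1 G2 : ℝ → ℝ, MemG G1 → MemG G2 → StOrd G1 G2 →
        ENNReal.ofReal γ ≤ P {ω | Ginv G1 (U ω) ≤ Ginv G2 (V ω)}) ↔
      ENNReal.ofReal γ ≤ P {ω | U ω ≤ V ω} := by
  have hUV : ∀ᵐ ω ∂P, U ω ∈ Ioo (0 : ℝ) 1 ∧ V ω ∈ Ioo (0 : ℝ) 1 :=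
    (ae_mem_Ioo_of_isUniform01 hU).and (ae_mem_Ioo_of_isUniform01 hV)
  constructor
  · intro h
    refine (h _ _ memG_uniformCDF memG_uniformCDF fun _ => le_rfl).trans (measure_mono_ae ?_)
    filter_upwards [hUV] with ω ⟨hu, hv⟩ (hω : Ginv uniformCDF (U ω) ≤ Ginv uniformCDF (V ω))
    rwa [ginv_uniformCDF (Ioo_subset_Ioc_self hu), ginv_uniformCDF (Ioo_subset_Ioc_self hv)] at hω
  · intro h G1 G2 hG1 hG2 hord
    refine h.trans (measure_mono_ae ?_)
    filter_upwards [hUV] with ω ⟨hu, hv⟩ hω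
    exact ginv_le_ginv_of_stOrd hG1.1 hG2.1 hord hu.1 hv.2 hω

/-- C ∈ 𝓛_γ (i.e. η(C,G1,G2) ≥ γ for all G1 ⪯st G2 in 𝒢) iff η(C) = P(U ≤ V) ≥ γ. -/
theorem stmt4 {Ω : Type*} [MeasurableSpace Ω] (P : Measure Ω) [IsProbabilityMeasure P]
    (U V : Ω → ℝ) (hU : IsUniform01 P U) (hV : IsUniform01 P V)
    (γ : ℝ) (hγ : γ ∈ Icc (0:ℝ) 1) :
    (∀ G1 G2 : ℝ → ℝ, MemG G1 → MemG G2 → StOrd G1 G2 →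
        ENNReal.ofReal γ ≤ P {ω | Ginv G1 (U ω) ≤ Ginv G2 (V ω)}) ↔
      ENNReal.ofReal γ ≤ P {ω | U ω ≤ V ω} :=
  stmt4_general P U V hU hV γ
end
end

section
/- Fix γ ∈ (0,1]. On the probability space ([0,1], Borel σ-algebra, Lebesgue measure λ), define X1(ω) = ω and X2^(γ)(ω) = ω + 1 − γ if ω ∈ [0,γ], and X2^(γ)(ω) = ω − γ if ω ∈ (γ,1]. Then for all u, v ∈ [0,1], the joint distribution function satisfies λ({ω : X1(ω) ≤ u and X2^(γ)(ω) ≤ v}) = min{ u, v, max{u − γ, 0} + max{v + γ − 1, 0} }. In other words, the connecting copula of (X1, X2^(γ)) is C_γ(u,v) = min{u, v, max{u−γ,0} + max{v+γ−1,0}}. -/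
open MeasureTheory Set

noncomputable section

/-! The event `{X₁ ≤ u, X₂ ≤ v}` splits along `ω ≤ γ`, where `X₂(ω) = ω + 1 - γ`, and `ω > γ`,
where `X₂(ω) = ω - γ`; on each piece it is an interval, so its measure is a sum of two interval
lengths, and comparing the resulting piecewise-linear expression with the copula formula is a
case analysis on the orders of `u`, `v`, `γ`. -/

theorem setOf_le_and_shift_le_inter_Icc {γ u : ℝ} (v : ℝ) (hγ₀ : 0 ≤ γ) (hγ₁ : γ ≤ 1)
    (hu : u ≤ 1) :
    {ω : ℝ | ω ≤ u ∧ (if ω ≤ γ then ω + 1 - γ else ω - γ) ≤ v} ∩ Icc 0 1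
      = Icc 0 (min γ (min u (v + γ - 1))) ∪ Ioc γ (min u (v + γ)) := by
  ext ω
  simp only [mem_inter_iff, mem_ofPred_eq, mem_Icc, mem_union, mem_Ioc, le_min_iff]
  split_ifs <;> grind

theorem Real.volume_Icc_union_Ioc {a b c d : ℝ} (hbc : b ≤ c) :
    volume (Icc a b ∪ Ioc c d) = ENNReal.ofReal (b - a) + ENNReal.ofReal (d - c) := by
  have hdisj : Disjoint (Icc a b) (Ioc c d) :=
    disjoint_left.2 fun _ hb hc => (hb.2.trans hbc).not_gt hc.1
  rw [measure_union hdisj measurableSet_Ioc, Real.volume_Icc, Real.volume_Ioc]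

theorem ENNReal.ofReal_add_ofReal (x y : ℝ) :
    ENNReal.ofReal x + ENNReal.ofReal y = ENNReal.ofReal (max x 0 + max y 0) := by
  rw [ENNReal.ofReal_add (le_max_right _ _) (le_max_right _ _), ENNReal.ofReal_max,
    ENNReal.ofReal_max, ENNReal.ofReal_zero, max_eq_left zero_le, max_eq_left zero_le]

theorem max_min_add_max_min_sub_eq_copula {γ u v : ℝ} (hγ₀ : 0 ≤ γ) (hγ₁ : γ ≤ 1)
    (hu₀ : 0 ≤ u) (hu₁ : u ≤ 1) (hv₀ : 0 ≤ v) :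
    max (min γ (min u (v + γ - 1))) 0 + max (min u (v + γ) - γ) 0
      = min u (min v (max (u - γ) 0 + max (v + γ - 1) 0)) := by
  rw [← min_sub_sub_right, add_sub_cancel_right, max_min_distrib_right, max_min_distrib_right,
    max_min_distrib_right, max_eq_left hγ₀, max_eq_left hu₀, max_eq_left hv₀]
  rcases max_cases (u - γ) 0 with ⟨hp, hup⟩ | ⟨hp, hup⟩ <;>
    rcases max_cases (v + γ - 1) 0 with ⟨hq, hvq⟩ | ⟨hq, hvq⟩ <;>
    rw [hp, hq] <;> simp only [min_def] <;> split_ifs <;> linarith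

/-- The connecting copula of (X1, X2^(γ)) is
C_γ(u,v) = min{u, v, max{u-γ,0} + max{v+γ-1,0}}. -/
theorem stmt8 (γ : ℝ) (hγ : γ ∈ Ioc (0:ℝ) 1) (u v : ℝ)
    (hu : u ∈ Icc (0:ℝ) 1) (hv : v ∈ Icc (0:ℝ) 1) :
    volume.restrict (Icc (0:ℝ) 1)
        {ω : ℝ | ω ≤ u ∧ (if ω ≤ γ then ω + 1 - γ else ω - γ) ≤ v}
      = ENNReal.ofReal (min u (min v (max (u - γ) 0 + max (v + γ - 1) 0))) := by
  rw [Measure.restrict_apply' measurableSet_Icc,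
    setOf_le_and_shift_le_inter_Icc v hγ.1.le hγ.2 hu.2,
    Real.volume_Icc_union_Ioc (min_le_left _ _), sub_zero, ENNReal.ofReal_add_ofReal,
    max_min_add_max_min_sub_eq_copula hγ.1.le hγ.2 hu.1 hu.2 hv.1]
end
end

section
/- For every γ ∈ (0,1] there exists a probability space carrying a pair (U,V) of random variables, each uniformly distributed on [0,1], such that P(U ≤ V) = γ. Consequently, for all 0 ≤ γ < γ' ≤ 1, there is a copula belonging to the class 𝓛_γ but not to 𝓛_{γ'}, so 𝓛_{γ'} is strictly contained in 𝓛_γ. -/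
open MeasureTheory Set

noncomputable section

/-! Take `U` uniform on `(0, 1]` and let `V` be `U` rotated by `-γ` modulo `1`, i.e. the interval
`(0, γ]` is moved to the right end `(1 - γ, 1]` and `(γ, 1]` is moved down to `(0, 1 - γ]`.
A rotation preserves Lebesgue measure, so `V` is uniform too, and `U ≤ V` holds exactly on
`(0, γ]`, an event of probability `γ`. For `γ < γ'` the copula built from `(γ + γ') / 2` lies in
`𝓛_γ` but not in `𝓛_{γ'}`. -/

theorem map_add_const_volume_restrict_Ioc (a b d : ℝ) :
    (volume.restrict (Ioc a b)).map (· + d) = volume.restrict (Ioc (a + d) (b + d)) := by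
  simpa using ((measurePreserving_add_right volume d).restrict_preimage
    (measurableSet_Ioc (a := a + d) (b := b + d))).map_eq

theorem restrict_Ioc_eq_add_restrict_Ioc {μ : Measure ℝ} {a b c : ℝ} (hab : a ≤ b) (hbc : b ≤ c) :
    μ.restrict (Ioc a c) = μ.restrict (Ioc a b) + μ.restrict (Ioc b c) := by
  rw [← Ioc_union_Ioc_eq_Ioc hab hbc,
    Measure.restrict_union (Ioc_disjoint_Ioc_of_le le_rfl) measurableSet_Ioc]

theorem volume_restrict_Ioc_eq_Icc (a b : ℝ) :
    volume.restrict (Ioc a b) = volume.restrict (Icc a b) :=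
  Measure.restrict_congr_set Ioc_ae_eq_Icc

def unitRotation (γ x : ℝ) : ℝ := if x ≤ γ then x + (1 - γ) else x - γ

theorem measurable_unitRotation (γ : ℝ) : Measurable (unitRotation γ) :=
  Measurable.ite measurableSet_Iic (measurable_add_const _) (measurable_sub_const _)

theorem map_unitRotation_volume_restrict_Ioc {γ : ℝ} (hγ0 : 0 ≤ γ) (hγ1 : γ ≤ 1) :
    (volume.restrict (Ioc 0 1)).map (unitRotation γ) = volume.restrict (Ioc (0 : ℝ) 1) := by
  have hlow : (volume.restrict (Ioc 0 γ)).map (unitRotation γ)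
      = volume.restrict (Ioc (1 - γ) 1) := by
    have h : unitRotation γ =ᵐ[volume.restrict (Ioc 0 γ)] (· + (1 - γ)) :=
      ae_restrict_of_forall_mem measurableSet_Ioc fun x hx => if_pos hx.2
    rw [Measure.map_congr h, map_add_const_volume_restrict_Ioc, zero_add, add_sub_cancel]
  have hhigh : (volume.restrict (Ioc γ 1)).map (unitRotation γ)
      = volume.restrict (Ioc 0 (1 - γ)) := by
    have h : unitRotation γ =ᵐ[volume.restrict (Ioc γ 1)] (· + -γ) :=
      ae_restrict_of_forall_mem measurableSet_Ioc fun x hx =>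
        (if_neg (not_le.2 hx.1)).trans (sub_eq_add_neg x γ)
    rw [Measure.map_congr h, map_add_const_volume_restrict_Ioc, add_neg_cancel, ← sub_eq_add_neg]
  conv_lhs => rw [restrict_Ioc_eq_add_restrict_Ioc hγ0 hγ1]
  rw [Measure.map_add _ _ (measurable_unitRotation γ), hlow, hhigh, add_comm,
    ← restrict_Ioc_eq_add_restrict_Ioc (by linarith) (by linarith)]

theorem isUniform01_id : IsUniform01 (volume.restrict (Ioc (0 : ℝ) 1)) id :=
  ⟨measurable_id, by rw [Measure.map_id, volume_restrict_Ioc_eq_Icc]⟩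

theorem isUniform01_unitRotation {γ : ℝ} (hγ0 : 0 ≤ γ) (hγ1 : γ ≤ 1) :
    IsUniform01 (volume.restrict (Ioc (0 : ℝ) 1)) (unitRotation γ) :=
  ⟨measurable_unitRotation γ, by
    rw [map_unitRotation_volume_restrict_Ioc hγ0 hγ1, volume_restrict_Ioc_eq_Icc]⟩

theorem setOf_le_unitRotation_inter_Ioc {γ : ℝ} (hγ0 : 0 < γ) (hγ1 : γ ≤ 1) :
    {x | x ≤ unitRotation γ x} ∩ Ioc 0 1 = Ioc 0 γ := by
  ext x
  simp only [unitRotation, mem_inter_iff, mem_ofPred_eq, mem_Ioc]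
  split_ifs with hx
  · constructor
    · exact fun h => ⟨h.2.1, hx⟩
    · exact fun h => ⟨by linarith, h.1, by linarith⟩
  · constructor
    · exact fun h => absurd h.1 (by linarith)
    · exact fun h => absurd h.2 hx

theorem volume_restrict_setOf_le_unitRotation {γ : ℝ} (hγ0 : 0 < γ) (hγ1 : γ ≤ 1) :
    volume.restrict (Ioc 0 1) {x | x ≤ unitRotation γ x} = ENNReal.ofReal γ := by
  rw [Measure.restrict_apply (measurableSet_le measurable_id (measurable_unitRotation γ) :
      MeasurableSet {x | x ≤ unitRotation γ x}),
    setOf_le_unitRotation_inter_Ioc hγ0 hγ1, Real.volume_Ioc, sub_zero]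

theorem exists_uniform_pair_prob_le_eq {γ : ℝ} (hγ : γ ∈ Ioc (0 : ℝ) 1) :
    ∃ (Ω : Type) (_ : MeasurableSpace Ω) (P : Measure Ω),
      IsProbabilityMeasure P ∧ ∃ U V : Ω → ℝ, IsUniform01 P U ∧ IsUniform01 P V ∧
        P {ω | U ω ≤ V ω} = ENNReal.ofReal γ :=
  ⟨ℝ, inferInstance, volume.restrict (Ioc 0 1), ⟨by simp⟩, id, unitRotation γ, isUniform01_id,
    isUniform01_unitRotation hγ.1.le hγ.2, volume_restrict_setOf_le_unitRotation hγ.1 hγ.2⟩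

/-- For every γ ∈ (0,1] there is a copula (pair of uniform [0,1] rv's) with
P(U ≤ V) = γ; consequently for 0 ≤ γ < γ' ≤ 1 there is a copula in 𝓛_γ but not in 𝓛_{γ'},
so the inclusion 𝓛_{γ'} ⊂ 𝓛_γ is strict. -/
theorem stmt9 :
    (∀ γ ∈ Ioc (0:ℝ) 1, ∃ (Ω : Type) (_ : MeasurableSpace Ω) (P : Measure Ω),
        IsProbabilityMeasure P ∧ ∃ U V : Ω → ℝ, IsUniform01 P U ∧ IsUniform01 P V ∧
          P {ω | U ω ≤ V ω} = ENNReal.ofReal γ) ∧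
    (∀ γ γ' : ℝ, 0 ≤ γ → γ < γ' → γ' ≤ 1 →
      ∃ (Ω : Type) (_ : MeasurableSpace Ω) (P : Measure Ω),
        IsProbabilityMeasure P ∧ ∃ U V : Ω → ℝ, IsUniform01 P U ∧ IsUniform01 P V ∧
          ENNReal.ofReal γ ≤ P {ω | U ω ≤ V ω} ∧
          ¬ ENNReal.ofReal γ' ≤ P {ω | U ω ≤ V ω}) := by
  refine ⟨fun γ hγ => exists_uniform_pair_prob_le_eq hγ, fun γ γ' hγ0 hγγ' hγ'1 => ?_⟩
  obtain ⟨Ω, _, P, hP, U, V, hU, hV, hUV⟩ :=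
    exists_uniform_pair_prob_le_eq (γ := (γ + γ') / 2) ⟨by linarith, by linarith⟩
  refine ⟨Ω, _, P, hP, U, V, hU, hV, ?_, ?_⟩ <;> rw [hUV]
  · exact ENNReal.ofReal_le_ofReal (by linarith)
  · exact not_le.2 ((ENNReal.ofReal_lt_ofReal_iff_of_nonneg (by linarith)).2 (by linarith))
end
end

section
/- Let r be a binary relation on the class 𝒢 of distribution functions satisfying: (a) r(G,G) holds for every G ∈ 𝒢, and (b) whenever r(G1,G2) holds one has G1 ⪯st G2. Let (U,V) be a pair of random variables on a probability space (Ω, 𝓕, P), each uniformly distributed on [0,1] (representing a copula C), and let γ ∈ [0,1]. Then the following are equivalent: (i) for all G1, G2 ∈ 𝒢 with r(G1,G2) one has P(G1⁻¹(U) ≤ G2⁻¹(V)) ≥ γ; (ii) for all G1, G2 ∈ 𝒢 with G1 ⪯st G2 one has P(G1⁻¹(U) ≤ G2⁻¹(V)) ≥ γ. (That is, 𝓛_γ^(∗) = 𝓛_γ for any reflexive relation ⪯∗ stronger than ⪯st.) -/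
/-! Taking G1 = G2 = G, which r allows by reflexivity, condition (i) already gives
P(G⁻¹(U) ≤ G⁻¹(V)) ≥ γ for every G ∈ 𝒢. If G1 ⪯st G2, then G1⁻¹ ≤ G2⁻¹ on (0,1), where V lies
almost surely, so the event {G1⁻¹(U) ≤ G1⁻¹(V)} is a.s. contained in {G1⁻¹(U) ≤ G2⁻¹(V)}. -/

open MeasureTheory Set

noncomputable section

lemma ginv_le_ginv_of_stOrd_s10 {G1 G2 : ℝ → ℝ} (hord : StOrd G1 G2)
    (hG1 : Filter.Tendsto G1 Filter.atBot (nhds 0)) (hG2 : Filter.Tendsto G2 Filter.atTop (nhds 1))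
    {v : ℝ} (hv : v ∈ Ioo 0 1) : Ginv G1 v ≤ Ginv G2 v := by
  have hne : {x | v ≤ G2 x}.Nonempty :=
    let ⟨x, hx⟩ := (hG2.eventually (eventually_gt_nhds hv.2)).exists
    ⟨x, hx.le⟩
  have hbdd : BddBelow {x | v ≤ G1 x} := by
    obtain ⟨N, hN⟩ := Filter.eventually_atBot.mp (hG1.eventually (eventually_lt_nhds hv.1))
    exact ⟨N, fun x hx => le_of_not_gt fun hxN => (hN x hxN.le).not_ge hx⟩
  exact csInf_le_csInf hbdd hne fun x hx => hx.trans (hord x)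

lemma IsUniform01.ae_mem_Ioo {Ω : Type*} [MeasurableSpace Ω] {P : Measure Ω} {U : Ω → ℝ}
    (hU : IsUniform01 P U) : ∀ᵐ ω ∂P, U ω ∈ Ioo 0 1 := by
  have h : ∀ᵐ x ∂(Measure.map U P), x ∈ Ioo (0 : ℝ) 1 := by
    rw [hU.2, ae_restrict_iff' measurableSet_Icc]
    filter_upwards [Ioo_ae_eq_Icc (μ := volume) (a := (0 : ℝ)) (b := 1)] with x hx hIcc
    exact hx.mpr hIcc
  exact ae_of_ae_map hU.1.aemeasurable h

theorem stmt10_general {Ω : Type*} [MeasurableSpace Ω] (P : Measure Ω)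
    (U V : Ω → ℝ) (hV : IsUniform01 P V)
    (r : (ℝ → ℝ) → (ℝ → ℝ) → Prop)
    (hrefl : ∀ G : ℝ → ℝ, MemG G → r G G)
    (hst : ∀ G1 G2 : ℝ → ℝ, MemG G1 → MemG G2 → r G1 G2 → StOrd G1 G2)
    (γ : ℝ) :
    (∀ G1 G2 : ℝ → ℝ, MemG G1 → MemG G2 → r G1 G2 →
        ENNReal.ofReal γ ≤ P {ω | Ginv G1 (U ω) ≤ Ginv G2 (V ω)}) ↔
    (∀ G1 G2 : ℝ → ℝ, MemG G1 → MemG G2 → StOrd G1 G2 →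
        ENNReal.ofReal γ ≤ P {ω | Ginv G1 (U ω) ≤ Ginv G2 (V ω)}) := by
  refine ⟨fun h G1 G2 hG1 hG2 hord => ?_,
    fun h G1 G2 hG1 hG2 hr => h G1 G2 hG1 hG2 (hst G1 G2 hG1 hG2 hr)⟩
  calc ENNReal.ofReal γ ≤ P {ω | Ginv G1 (U ω) ≤ Ginv G1 (V ω)} :=
        h G1 G1 hG1 hG1 (hrefl G1 hG1)
    _ ≤ P {ω | Ginv G1 (U ω) ≤ Ginv G2 (V ω)} := measure_mono_ae <|
      hV.ae_mem_Ioo.mono fun ω hω hle =>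
        hle.trans (ginv_le_ginv_of_stOrd_s10 hord hG1.1.2.2.1 hG2.1.2.2.2 hω)

/-- For any reflexive binary relation r on 𝒢 that is stronger than ⪯st,
the class 𝓛_γ^(∗) defined through r coincides with 𝓛_γ. -/
theorem stmt10 {Ω : Type*} [MeasurableSpace Ω] (P : Measure Ω) [IsProbabilityMeasure P]
    (U V : Ω → ℝ) (hU : IsUniform01 P U) (hV : IsUniform01 P V)
    (r : (ℝ → ℝ) → (ℝ → ℝ) → Prop)
    (hrefl : ∀ G : ℝ → ℝ, MemG G → r G G)
    (hst : ∀ G1 G2 : ℝ → ℝ, MemG G1 → MemG G2 → r G1 G2 → StOrd G1 G2)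
    (γ : ℝ) (hγ : γ ∈ Icc (0:ℝ) 1) :
    (∀ G1 G2 : ℝ → ℝ, MemG G1 → MemG G2 → r G1 G2 →
        ENNReal.ofReal γ ≤ P {ω | Ginv G1 (U ω) ≤ Ginv G2 (V ω)}) ↔
    (∀ G1 G2 : ℝ → ℝ, MemG G1 → MemG G2 → StOrd G1 G2 →
        ENNReal.ofReal γ ≤ P {ω | Ginv G1 (U ω) ≤ Ginv G2 (V ω)}) :=
  stmt10_general P U V hV r hrefl hst γ

end
end

section
/- Let Y1, Y2, Y3, Y4, Y5 be independent and identically distributed real-valued random variables on a probability space (Ω, 𝓕, P), whose common distribution is atomless (has continuous distribution function). Define T := min(Y1, Y2), X' := max(Y1, Y2), and X'' := max(Y3, Y4, Y5). Then: (i) X' ⪯st X'', i.e., P(X' > t) ≤ P(X'' > t) for all t ∈ ℝ; (ii) P(T ≤ X') = 1; and (iii) P(T ≤ X'') < 1. Hence the implication T ⪯st X' ⪯st X'' ⇒ P(T ≤ X'') ≤ P(T ≤ X') fails when the connecting copulas of (T,X') and (T,X'') differ. -/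
/-!
The maximum of `n` i.i.d. copies of `Y` is `≤ t` with probability `F(t)^n`, where `F` is
the distribution function of `Y`; since `F(t)^3 ≤ F(t)^2`, the maximum of three copies
dominates the maximum of two. On the other hand, with `t` a median of `Y` (which exists
because `F` is continuous), the event `Y₁, Y₂ > t ≥ Y₃, Y₄, Y₅` has probability `2⁻⁵ > 0`,
and on it `min(Y₁, Y₂) > max(Y₃, Y₄, Y₅)`.
-/

open MeasureTheory Set ProbabilityTheory

namespace ProbabilityTheory

section Median

variable (μ : Measure ℝ) [IsProbabilityMeasure μ] [NullSingletonClass μ]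

lemma continuous_cdf : Continuous (cdf μ) := by
  refine continuous_iff_continuousAt.2 fun a ↦ ?_
  rw [(monotone_cdf μ).continuousAt_iff_leftLim_eq_rightLim, (cdf μ).rightLim_eq]
  have hjump : ENNReal.ofReal (cdf μ a - Function.leftLim (cdf μ) a) = 0 := by
    rw [← StieltjesFunction.measure_singleton, measure_cdf, measure_singleton]
  have := (monotone_cdf μ).leftLim_le (le_refl a)
  rw [ENNReal.ofReal_eq_zero] at hjump
  linarith

lemma exists_cdf_eq {p : ℝ} (hp : p ∈ Ioo 0 1) : ∃ t, cdf μ t = p :=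
  mem_range_of_exists_le_of_exists_ge (continuous_cdf μ)
    ((tendsto_cdf_atBot μ).eventually_le_const hp.1).exists
    ((tendsto_cdf_atTop μ).eventually_const_le hp.2).exists

lemma exists_measure_Iic_eq_half_and_measure_Ioi_eq_half :
    ∃ t, μ (Iic t) = 2⁻¹ ∧ μ (Ioi t) = 2⁻¹ := by
  obtain ⟨t, ht⟩ := exists_cdf_eq μ (p := 2⁻¹) (by norm_num)
  have hIic : μ (Iic t) = 2⁻¹ := by
    rw [← ofReal_cdf, ht, ENNReal.ofReal_inv_of_pos two_pos, ENNReal.ofReal_ofNat]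
  refine ⟨t, hIic, ?_⟩
  rw [← compl_Iic, prob_compl_eq_one_sub measurableSet_Iic, hIic, ENNReal.one_sub_inv_two]

end Median

variable {Ω : Type*} [MeasurableSpace Ω] {P : Measure Ω}

lemma exists_measure_preimage_Iic_eq_half_and_Ioi_eq_half [IsProbabilityMeasure P]
    {X : Ω → ℝ} (hX : AEMeasurable X P) (hatomless : ∀ x, P {ω | X ω = x} = 0) :
    ∃ t, P (X ⁻¹' Iic t) = 2⁻¹ ∧ P (X ⁻¹' Ioi t) = 2⁻¹ := by
  have : IsProbabilityMeasure (P.map X) := Measure.isProbabilityMeasure_map hX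
  have : NullSingletonClass (P.map X) :=
    ⟨fun x ↦ by
      rw [Measure.map_apply_of_aemeasurable hX (measurableSet_singleton x)]
      exact hatomless x⟩
  simpa only [Measure.map_apply_of_aemeasurable hX measurableSet_Iic,
    Measure.map_apply_of_aemeasurable hX measurableSet_Ioi]
    using exists_measure_Iic_eq_half_and_measure_Ioi_eq_half (P.map X)

lemma prob_lt_one_of_disjoint [IsProbabilityMeasure P] {s E : Set Ω}
    (hs : NullMeasurableSet s P) (hE : P E ≠ 0) (hEs : Disjoint E s) : P s < 1 :=
  prob_le_one.lt_of_ne fun h ↦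
    hE (measure_mono_null hEs.subset_compl_right ((prob_compl_eq_zero_iff₀ hs).2 h))

variable {ι β : Type*} [MeasurableSpace β] {Y : ι → Ω → β}

lemma iIndepFun.measure_biInter_preimage_eq_pow (hindep : iIndepFun Y P) {j : ι}
    (hident : ∀ i, IdentDistrib (Y i) (Y j) P P) (S : Finset ι) {A : Set β}
    (hA : MeasurableSet A) : P (⋂ i ∈ S, Y i ⁻¹' A) = P (Y j ⁻¹' A) ^ S.card := by
  rw [hindep.meas_biInter fun i _ ↦ ⟨A, hA, rfl⟩, ← Finset.prod_const]
  exact Finset.prod_congr rfl fun i _ ↦ (hident i).measure_mem_eq hA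

lemma iIndepFun.measure_compl_biInter_preimage_le [IsProbabilityMeasure P]
    (hindep : iIndepFun Y P) {j : ι} (hident : ∀ i, IdentDistrib (Y i) (Y j) P P)
    {S T : Finset ι} (hST : S.card ≤ T.card) {A : Set β} (hA : MeasurableSet A) :
    P (⋂ i ∈ S, Y i ⁻¹' A)ᶜ ≤ P (⋂ i ∈ T, Y i ⁻¹' A)ᶜ := by
  have hnull (U : Finset ι) : NullMeasurableSet (⋂ i ∈ U, Y i ⁻¹' A) P :=
    .biInter U.countable_toSet fun i _ ↦ (hident i).aemeasurable_fst.nullMeasurableSet_preimage hA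
  rw [prob_compl_eq_one_sub₀ (hnull S), prob_compl_eq_one_sub₀ (hnull T),
    hindep.measure_biInter_preimage_eq_pow hident S hA,
    hindep.measure_biInter_preimage_eq_pow hident T hA]
  exact tsub_le_tsub_left (pow_le_pow_right_of_le_one' prob_le_one hST) 1

lemma iIndepFun.measure_iInter_preimage_ne_zero [Fintype ι] (hindep : iIndepFun Y P)
    {A : ι → Set β} (hA : ∀ i, MeasurableSet (A i)) (hpos : ∀ i, P (Y i ⁻¹' A i) ≠ 0) :
    P (⋂ i, Y i ⁻¹' A i) ≠ 0 := by
  rw [hindep.meas_iInter fun i ↦ ⟨A i, hA i, rfl⟩]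
  exact Finset.prod_ne_zero_iff.2 fun i _ ↦ hpos i

end ProbabilityTheory

theorem stmt13_general {Ω : Type*} [MeasurableSpace Ω] (P : Measure Ω) [IsProbabilityMeasure P]
    (Y : Fin 5 → Ω → ℝ)
    (hindep : iIndepFun Y P)
    (hident : ∀ i j, IdentDistrib (Y i) (Y j) P P)
    (hatomless : ∀ x : ℝ, P {ω | Y 0 ω = x} = 0) :
    (∀ t : ℝ, P {ω | t < max (Y 0 ω) (Y 1 ω)}
        ≤ P {ω | t < max (Y 2 ω) (max (Y 3 ω) (Y 4 ω))}) ∧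
    P {ω | min (Y 0 ω) (Y 1 ω) ≤ max (Y 0 ω) (Y 1 ω)} = 1 ∧
    P {ω | min (Y 0 ω) (Y 1 ω) ≤ max (Y 2 ω) (max (Y 3 ω) (Y 4 ω))} < 1 := by
  refine ⟨fun t ↦ ?_, by simp, ?_⟩
  · have hX' : {ω | t < max (Y 0 ω) (Y 1 ω)} =
        (⋂ i ∈ ({0, 1} : Finset (Fin 5)), Y i ⁻¹' Iic t)ᶜ := by
      ext; simp [imp_iff_not_or]
    have hX'' : {ω | t < max (Y 2 ω) (max (Y 3 ω) (Y 4 ω))} =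
        (⋂ i ∈ ({2, 3, 4} : Finset (Fin 5)), Y i ⁻¹' Iic t)ᶜ := by
      ext; simp [imp_iff_not_or]
    rw [hX', hX'']
    exact hindep.measure_compl_biInter_preimage_le (hident · 0) (by decide) measurableSet_Iic
  · have hY (i : Fin 5) : AEMeasurable (Y i) P := (hident i i).aemeasurable_fst
    obtain ⟨t, hIic, hIoi⟩ :=
      exists_measure_preimage_Iic_eq_half_and_Ioi_eq_half (hY 0) hatomless
    let A : Fin 5 → Set ℝ := ![Ioi t, Ioi t, Iic t, Iic t, Iic t]
    have hA : ∀ i, MeasurableSet (A i) := by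
      intro i; fin_cases i <;> simp [A, measurableSet_Ioi, measurableSet_Iic]
    have hsep : P (⋂ i, Y i ⁻¹' A i) ≠ 0 :=
      hindep.measure_iInter_preimage_ne_zero hA fun i ↦ by
        rw [(hident i 0).measure_mem_eq (hA i)]; fin_cases i <;> simp [A, hIic, hIoi]
    refine prob_lt_one_of_disjoint
      (nullMeasurableSet_le ((hY 0).min (hY 1)) ((hY 2).max ((hY 3).max (hY 4)))) hsep
      (disjoint_left.2 fun ω hω hle ↦ ?_)
    have hYA := mem_iInter.1 hω
    have hlow : max (Y 2 ω) (max (Y 3 ω) (Y 4 ω)) ≤ t :=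
      max_le (hYA 2) (max_le (hYA 3) (hYA 4))
    have hhigh : t < min (Y 0 ω) (Y 1 ω) := lt_min (hYA 0) (hYA 1)
    exact (hlow.trans_lt hhigh).not_ge hle

/-- For Y1,...,Y5 i.i.d. with atomless common distribution,
T = min(Y1,Y2), X' = max(Y1,Y2), X'' = max(Y3,Y4,Y5): X' ⪯st X'', P(T ≤ X') = 1,
but P(T ≤ X'') < 1. -/
theorem stmt13 {Ω : Type*} [MeasurableSpace Ω] (P : Measure Ω) [IsProbabilityMeasure P]
    (Y : Fin 5 → Ω → ℝ) (hmeas : ∀ i, Measurable (Y i))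
    (hindep : iIndepFun Y P)
    (hident : ∀ i j, IdentDistrib (Y i) (Y j) P P)
    (hatomless : ∀ x : ℝ, P {ω | Y 0 ω = x} = 0) :
    (∀ t : ℝ, P {ω | t < max (Y 0 ω) (Y 1 ω)}
        ≤ P {ω | t < max (Y 2 ω) (max (Y 3 ω) (Y 4 ω))}) ∧
    P {ω | min (Y 0 ω) (Y 1 ω) ≤ max (Y 0 ω) (Y 1 ω)} = 1 ∧
    P {ω | min (Y 0 ω) (Y 1 ω) ≤ max (Y 2 ω) (max (Y 3 ω) (Y 4 ω))} < 1 :=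
  stmt13_general P Y hindep hident hatomless
end

section
/- The double integral over the unit square of the function (u,v) ↦ 1/(2·sqrt(v)·sqrt(1−u)) restricted to the region {(u,v) ∈ [0,1]² : u ≤ v} equals 2 − π/2; that is, ∫₀¹∫₀¹ 1_{u ≤ v} · (2·sqrt(v)·sqrt(1−u))⁻¹ dv du = 2 − π/2. Moreover 2 − π/2 < 1/2. (This is the value η(K) for the copula K of the order statistics of two i.i.d. continuous random variables.) -/
open MeasureTheory Set intervalIntegral Real

noncomputable section

/-! The inner integral only sees `v ∈ [u, 1]`, where `∫ (2√v)⁻¹ dv = √v` gives the value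
`(1 - √u) / √(1 - u)`. This function of `u` is the derivative of
`√u √(1 - u) - 2 √(1 - u) - arcsin √u`, which runs from `-2` at `0` to `-π/2` at `1`;
as the derivative is nonnegative, its integrability over `[0, 1]` comes for free. -/

theorem intervalIntegral_ite_le_eq {E : Type*} [NormedAddCommGroup E] [NormedSpace ℝ E]
    (f : ℝ → E) {a b c : ℝ} (hac : a ≤ c) (hcb : c ≤ b) :
    ∫ x in a..b, (if c ≤ x then f x else 0) = ∫ x in c..b, f x := by
  have hind : (fun x => if c ≤ x then f x else 0) = (Ici c).indicator f := by
    ext x; simp [indicator_apply]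
  have hae : (Ici c).indicator f =ᵐ[volume] (Ioi c).indicator f :=
    indicator_ae_eq_of_ae_eq_set Ioi_ae_eq_Ici.symm
  rw [integral_of_le (hac.trans hcb), integral_of_le hcb, hind,
    integral_congr_ae (ae_restrict_of_ae hae), setIntegral_indicator measurableSet_Ioi,
    Ioc_inter_Ioi, max_eq_right hac]

theorem integral_inv_sqrt {a b : ℝ} (ha : 0 ≤ a) (hb : 0 ≤ b) :
    ∫ x in a..b, (√x)⁻¹ = 2 * (√b - √a) := by
  have hrpow : ∀ x ∈ uIcc a b, (√x)⁻¹ = x ^ (-(1 / 2) : ℝ) := fun x hx => by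
    rw [rpow_neg (le_min ha hb |>.trans hx.1), sqrt_eq_rpow]
  rw [integral_congr hrpow, integral_rpow (Or.inl (by norm_num)),
    show (-(1 / 2) + 1 : ℝ) = 1 / 2 by norm_num, ← sqrt_eq_rpow, ← sqrt_eq_rpow]
  ring

theorem integral_ite_le_inv_two_mul_sqrt_mul_sqrt {u : ℝ} (hu : u ∈ Icc (0 : ℝ) 1) :
    ∫ v in (0 : ℝ)..1, (if u ≤ v then (2 * √v * √(1 - u))⁻¹ else 0)
      = (1 - √u) / √(1 - u) := by
  have hsplit : ∀ v : ℝ, (2 * √v * √(1 - u))⁻¹ = (2 * √(1 - u))⁻¹ * (√v)⁻¹ := fun v => by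
    ring
  rw [intervalIntegral_ite_le_eq _ hu.1 hu.2]
  simp_rw [hsplit]
  rw [intervalIntegral.integral_const_mul, integral_inv_sqrt hu.1 zero_le_one, sqrt_one, mul_inv]
  field_simp

theorem hasDerivAt_primitive_one_sub_sqrt_div_sqrt_one_sub {x : ℝ} (hx : x ∈ Ioo (0 : ℝ) 1) :
    HasDerivAt (fun u => √u * √(1 - u) - 2 * √(1 - u) - arcsin √u)
      ((1 - √x) / √(1 - x)) x := by
  obtain ⟨hx0, hx1⟩ := hx
  have ha : 0 < √x := sqrt_pos.mpr hx0
  have ha2 : √x ^ 2 = x := sq_sqrt hx0.le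
  have hb2 : √(1 - x) ^ 2 = 1 - x := sq_sqrt (by linarith)
  have hsqrt_lt_one : √x < 1 := by rw [sqrt_lt' one_pos]; linarith
  have d1 : HasDerivAt (fun u => √u) (1 / (2 * √x)) x := hasDerivAt_sqrt hx0.ne'
  have d2 : HasDerivAt (fun u => √(1 - u)) (1 / (2 * √(1 - x)) * (-1)) x :=
    (hasDerivAt_sqrt (by linarith : (1 : ℝ) - x ≠ 0)).comp x ((hasDerivAt_id x).const_sub 1)
  have d3 : HasDerivAt (fun u => arcsin √u) (1 / √(1 - √x ^ 2) * (1 / (2 * √x))) x :=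
    (hasDerivAt_arcsin (by linarith) hsqrt_lt_one.ne).comp x d1
  refine (((d1.mul d2).sub (d2.const_mul 2)).sub d3).congr_deriv ?_
  rw [ha2]
  field_simp
  linear_combination ha2 + hb2

theorem integral_one_sub_sqrt_div_sqrt_one_sub :
    ∫ u in (0 : ℝ)..1, (1 - √u) / √(1 - u) = 2 - π / 2 := by
  have hcont : ContinuousOn (fun u => √u * √(1 - u) - 2 * √(1 - u) - arcsin √u) (Icc 0 1) := by
    fun_prop
  have hnonneg : ∀ x ∈ Ioo (0 : ℝ) 1, 0 ≤ (1 - √x) / √(1 - x) := fun x hx =>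
    div_nonneg (sub_nonneg.mpr (sqrt_le_one.mpr hx.2.le)) (sqrt_nonneg _)
  have hderiv := fun x (hx : x ∈ Ioo (0 : ℝ) 1) =>
    hasDerivAt_primitive_one_sub_sqrt_div_sqrt_one_sub hx
  have hint : IntervalIntegrable (fun u => (1 - √u) / √(1 - u)) volume 0 1 :=
    (intervalIntegrable_iff_integrableOn_Ioc_of_le zero_le_one).2
      (integrableOn_deriv_of_nonneg hcont hderiv hnonneg)
  rw [integral_eq_sub_of_hasDerivAt_of_le zero_le_one hcont hderiv hint]
  simp only [sqrt_one, sub_self, sqrt_zero, mul_zero, arcsin_one, zero_sub, sub_zero, mul_one,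
    arcsin_zero, sub_neg_eq_add]
  ring

/-- ∫₀¹∫₀¹ 1_{u ≤ v}·(2√v·√(1-u))⁻¹ dv du = 2 - π/2, and 2 - π/2 < 1/2.
(This is η(K) for the copula K of the order statistics of two i.i.d. continuous rv's.) -/
theorem stmt16 :
    (∫ u in (0:ℝ)..1, ∫ v in (0:ℝ)..1,
        (if u ≤ v then (2 * Real.sqrt v * Real.sqrt (1 - u))⁻¹ else 0))
      = 2 - Real.pi / 2 ∧
    2 - Real.pi / 2 < 1 / 2 := by
  constructor
  · rw [integral_congr fun u hu =>
      integral_ite_le_inv_two_mul_sqrt_mul_sqrt (by rwa [uIcc_of_le zero_le_one] at hu)]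
    exact integral_one_sub_sqrt_div_sqrt_one_sub
  · linarith [pi_gt_three]
end
end

section
/- Let A, B be independent and identically distributed real-valued random variables on a probability space (Ω, 𝓕, P), with common distribution function G ∈ 𝒢, and let X1 := min(A,B), X2 := max(A,B). Then X1 has distribution function F1(x) = 2G(x) − G(x)², X2 has distribution function F2(x) = G(x)², and for every (u,v) ∈ [0,1]² the connecting copula of (X1, X2) is given by P( 2G(X1) − G(X1)² ≤ u and G(X2)² ≤ v ) = K(u,v), where K(u,v) := 2(1 − sqrt(1−u))·sqrt(v) − (1 − sqrt(1−u))² if v ≥ (1 − sqrt(1−u))², and K(u,v) := v otherwise. In particular K does not depend on G. -/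
/-!
Because `G ∈ 𝒢` is continuous and strictly increasing where `0 < G < 1`, the transforms `G A` and
`G B` are independent and uniform on `[0,1]`, and the monotone `G` commutes with `min` and `max`.
With `a = 1 - √(1 - u)` and `b = √v` the event becomes `{min (G A) (G B) ≤ a, max (G A) (G B) ≤ b}`.
For `a ≤ b` this is the union of `{G A ≤ a, G B ≤ b}` and `{G A ≤ b, G B ≤ a}`, which meet in
`{G A ≤ a, G B ≤ a}`, so its probability is `2ab - a²`; for `b < a` it is `{max (G A) (G B) ≤ b}`,
of probability `b² = v`.
-/

open MeasureTheory Set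

noncomputable section

open ProbabilityTheory

/-- The copula of the pair (min, max) of two i.i.d. continuous random variables. -/
def Kcopula (u v : ℝ) : ℝ :=
  if (1 - Real.sqrt (1 - u)) ^ 2 ≤ v then
    2 * (1 - Real.sqrt (1 - u)) * Real.sqrt v - (1 - Real.sqrt (1 - u)) ^ 2
  else v

section MinMax

variable {Ω α : Type*} [MeasurableSpace Ω] {μ : Measure Ω} [LinearOrder α] {X Y : Ω → α}

lemma measureReal_min_le_and_max_le_of_le {a b : α} (hba : b ≤ a) :
    μ.real {ω | min (X ω) (Y ω) ≤ a ∧ max (X ω) (Y ω) ≤ b} = μ.real {ω | max (X ω) (Y ω) ≤ b} :=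
  congrArg μ.real <| Set.ext fun _ =>
    and_iff_right_of_imp fun h => (min_le_max.trans h).trans hba

namespace ProbabilityTheory.IndepFun

variable [TopologicalSpace α] [OrderClosedTopology α] [MeasurableSpace α] [OpensMeasurableSpace α]

lemma measureReal_le_and_le (h : IndepFun X Y μ) (a b : α) :
    μ.real {ω | X ω ≤ a ∧ Y ω ≤ b} = μ.real {ω | X ω ≤ a} * μ.real {ω | Y ω ≤ b} := by
  simp only [measureReal_def, ← ENNReal.toReal_mul]
  exact congrArg ENNReal.toReal
    (h.measure_inter_preimage_eq_mul _ _ measurableSet_Iic measurableSet_Iic)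

lemma measureReal_max_le (h : IndepFun X Y μ) (x : α) :
    μ.real {ω | max (X ω) (Y ω) ≤ x} = μ.real {ω | X ω ≤ x} * μ.real {ω | Y ω ≤ x} := by
  simpa only [max_le_iff] using h.measureReal_le_and_le x x

variable [IsFiniteMeasure μ]

lemma measureReal_min_le (h : IndepFun X Y μ) (hY : Measurable Y) (x : α) :
    μ.real {ω | min (X ω) (Y ω) ≤ x} = μ.real {ω | X ω ≤ x} + μ.real {ω | Y ω ≤ x}
      - μ.real {ω | X ω ≤ x} * μ.real {ω | Y ω ≤ x} := by
  have hunion : {ω | min (X ω) (Y ω) ≤ x} = {ω | X ω ≤ x} ∪ {ω | Y ω ≤ x} := by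
    ext ω
    simp only [mem_union, mem_ofPred_eq, min_le_iff]
  have hincl_excl := measureReal_union_add_inter (μ := μ) (s := {ω | X ω ≤ x})
    (t := {ω | Y ω ≤ x}) (hY measurableSet_Iic)
  rw [← hunion, ← ofPred_and, h.measureReal_le_and_le] at hincl_excl
  linarith

lemma measureReal_min_le_and_max_le (h : IndepFun X Y μ) (hX : Measurable X)
    (hY : Measurable Y) {a b : α} (hab : a ≤ b) :
    μ.real {ω | min (X ω) (Y ω) ≤ a ∧ max (X ω) (Y ω) ≤ b} =
      μ.real {ω | X ω ≤ a} * μ.real {ω | Y ω ≤ b} + μ.real {ω | X ω ≤ b} * μ.real {ω | Y ω ≤ a}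
        - μ.real {ω | X ω ≤ a} * μ.real {ω | Y ω ≤ a} := by
  have hunion : {ω | min (X ω) (Y ω) ≤ a ∧ max (X ω) (Y ω) ≤ b} =
      {ω | X ω ≤ a ∧ Y ω ≤ b} ∪ {ω | X ω ≤ b ∧ Y ω ≤ a} := by
    ext ω
    simp only [mem_union, mem_ofPred_eq, min_le_iff, max_le_iff]
    constructor
    · rintro ⟨hXa | hYa, hXb, hYb⟩
      exacts [Or.inl ⟨hXa, hYb⟩, Or.inr ⟨hXb, hYa⟩]
    · rintro (⟨hXa, hYb⟩ | ⟨hXb, hYa⟩)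
      exacts [⟨Or.inl hXa, hXa.trans hab, hYb⟩, ⟨Or.inr hYa, hXb, hYa.trans hab⟩]
  have hinter : {ω | X ω ≤ a ∧ Y ω ≤ b} ∩ {ω | X ω ≤ b ∧ Y ω ≤ a} =
      {ω | X ω ≤ a ∧ Y ω ≤ a} :=
    Set.ext fun _ => ⟨fun ⟨⟨hXa, _⟩, _, hYa⟩ => ⟨hXa, hYa⟩,
      fun ⟨hXa, hYa⟩ => ⟨⟨hXa, hYa.trans hab⟩, hXa.trans hab, hYa⟩⟩
  have hincl_excl := measureReal_union_add_inter (μ := μ) (s := {ω | X ω ≤ a ∧ Y ω ≤ b})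
    (t := {ω | X ω ≤ b ∧ Y ω ≤ a}) ((hX measurableSet_Iic).inter (hY measurableSet_Iic))
  rw [hinter, ← hunion] at hincl_excl
  simp only [h.measureReal_le_and_le] at hincl_excl
  linarith

end ProbabilityTheory.IndepFun

end MinMax

lemma ProbabilityTheory.IndepFun.measureReal_min_le_and_max_le_of_cdf_eq_id
    {Ω : Type*} [MeasurableSpace Ω] {μ : Measure Ω} [IsFiniteMeasure μ] {U V : Ω → ℝ}
    (h : IndepFun U V μ) (hU : Measurable U) (hV : Measurable V)
    (hU_cdf : ∀ t ∈ Icc (0:ℝ) 1, μ.real {ω | U ω ≤ t} = t)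
    (hV_cdf : ∀ t ∈ Icc (0:ℝ) 1, μ.real {ω | V ω ≤ t} = t)
    {a b : ℝ} (ha : a ∈ Icc (0:ℝ) 1) (hb : b ∈ Icc (0:ℝ) 1) :
    μ.real {ω | min (U ω) (V ω) ≤ a ∧ max (U ω) (V ω) ≤ b} =
      if a ≤ b then 2 * a * b - a ^ 2 else b ^ 2 := by
  split_ifs with hab
  · rw [h.measureReal_min_le_and_max_le hU hV hab, hU_cdf a ha, hU_cdf b hb, hV_cdf a ha,
      hV_cdf b hb]
    ring
  · rw [measureReal_min_le_and_max_le_of_le (not_le.1 hab).le, h.measureReal_max_le,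
      hU_cdf b hb, hV_cdf b hb, sq]

namespace MemG

variable {G : ℝ → ℝ}

lemma monotone (hG : MemG G) : Monotone G := hG.1.1

lemma mem_Icc (hG : MemG G) (x : ℝ) : G x ∈ Icc (0:ℝ) 1 :=
  ⟨le_of_tendsto hG.1.2.2.1 ((Filter.eventually_le_atBot x).mono fun _ hy => hG.monotone hy),
    ge_of_tendsto hG.1.2.2.2 ((Filter.eventually_ge_atTop x).mono fun _ hy => hG.monotone hy)⟩

lemma exists_eq (hG : MemG G) {t : ℝ} (ht : t ∈ Ioo (0:ℝ) 1) : ∃ x, G x = t :=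
  mem_range_of_exists_le_of_exists_ge hG.2.1
    ((hG.1.2.2.1.eventually (eventually_le_nhds ht.1)).exists)
    ((hG.1.2.2.2.eventually (eventually_ge_nhds ht.2)).exists)

lemma apply_le_apply_iff (hG : MemG G) {x y : ℝ} (hx : G x ∈ Ioo (0:ℝ) 1) :
    G y ≤ G x ↔ y ≤ x := by
  refine ⟨fun hyx => not_lt.1 fun hxy => ?_, fun hyx => hG.monotone hyx⟩
  have hGy : G y = G x := le_antisymm hyx (hG.monotone hxy.le)
  exact (hG.2.2 hx (show 0 < G y ∧ G y < 1 from hGy ▸ hx) hxy).ne hGy.symm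

lemma measureReal_comp_le {Ω : Type*} [MeasurableSpace Ω] {μ : Measure Ω}
    [IsProbabilityMeasure μ] {A : Ω → ℝ} (hG : MemG G)
    (hlaw : ∀ x, μ.real {ω | A ω ≤ x} = G x) {t : ℝ} (ht : t ∈ Icc (0:ℝ) 1) :
    μ.real {ω | G (A ω) ≤ t} = t := by
  have hIoo : ∀ t ∈ Ioo (0:ℝ) 1, μ.real {ω | G (A ω) ≤ t} = t := by
    intro t ht
    obtain ⟨x, rfl⟩ := hG.exists_eq ht
    simp_rw [hG.apply_le_apply_iff ht]
    exact hlaw x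
  rcases ht.1.eq_or_lt with rfl | ht₀
  · -- `{G A ≤ 0}` has mass at most that of `{G A ≤ δ}`, i.e. `δ`, for every `δ ∈ (0,1)`
    refine le_antisymm (le_of_forall_pos_le_add fun ε hε => ?_) measureReal_nonneg
    have hδ : min ε (1 / 2) ∈ Ioo (0:ℝ) 1 :=
      ⟨lt_min hε one_half_pos, (min_le_right _ _).trans_lt one_half_lt_one⟩
    calc μ.real {ω | G (A ω) ≤ 0} ≤ μ.real {ω | G (A ω) ≤ min ε (1 / 2)} :=
          measureReal_mono fun _ hω => le_trans hω hδ.1.le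
      _ = min ε (1 / 2) := hIoo _ hδ
      _ ≤ 0 + ε := (min_le_left _ _).trans_eq (zero_add ε).symm
  rcases ht.2.eq_or_lt with rfl | ht₁
  · simp [fun ω => (hG.mem_Icc (A ω)).2]
  exact hIoo t ⟨ht₀, ht₁⟩

end MemG

lemma two_mul_sub_sq_le_iff {g u : ℝ} (hg : g ≤ 1) :
    2 * g - g ^ 2 ≤ u ↔ g ≤ 1 - √(1 - u) := by
  rw [le_sub_comm, Real.sqrt_le_left (sub_nonneg.2 hg)]
  constructor <;> intro h <;> linarith

lemma Kcopula_eq_ite {u v : ℝ} (hu : 0 ≤ u) (hv : 0 ≤ v) :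
    Kcopula u v = if 1 - √(1 - u) ≤ √v then 2 * (1 - √(1 - u)) * √v - (1 - √(1 - u)) ^ 2
      else √v ^ 2 := by
  simp only [Kcopula, ← Real.le_sqrt (sub_nonneg.2 (Real.sqrt_le_one.2 (sub_le_self 1 hu))) hv,
    Real.sq_sqrt hv]

/-- For A, B i.i.d. with common CDF G ∈ 𝒢, X1 = min(A,B) and X2 = max(A,B)
have CDFs 2G - G² and G², and the connecting copula of (X1,X2) is K, independently of G. -/
theorem stmt17 {Ω : Type*} [MeasurableSpace Ω] (P : Measure Ω) [IsProbabilityMeasure P]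
    (A B : Ω → ℝ) (hA : Measurable A) (hB : Measurable B)
    (hindep : IndepFun A B P) (hident : IdentDistrib A B P P)
    (G : ℝ → ℝ) (hG : MemG G)
    (hlaw : ∀ t, (P {ω | A ω ≤ t}).toReal = G t) :
    (∀ x, (P {ω | min (A ω) (B ω) ≤ x}).toReal = 2 * G x - G x ^ 2) ∧
    (∀ x, (P {ω | max (A ω) (B ω) ≤ x}).toReal = G x ^ 2) ∧
    (∀ u ∈ Icc (0:ℝ) 1, ∀ v ∈ Icc (0:ℝ) 1,
      (P {ω | 2 * G (min (A ω) (B ω)) - G (min (A ω) (B ω)) ^ 2 ≤ u ∧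
              G (max (A ω) (B ω)) ^ 2 ≤ v}).toReal = Kcopula u v) := by
  simp only [← measureReal_def] at hlaw ⊢
  have hlawB : ∀ x, P.real {ω | B ω ≤ x} = G x := fun x =>
    (congrArg ENNReal.toReal (hident.measure_mem_eq measurableSet_Iic)).symm.trans (hlaw x)
  refine ⟨fun x => ?_, fun x => ?_, fun u hu v hv => ?_⟩
  · rw [hindep.measureReal_min_le hB, hlaw, hlawB]
    ring
  · rw [hindep.measureReal_max_le, hlaw, hlawB, sq]
  have hevent : {ω | 2 * G (min (A ω) (B ω)) - G (min (A ω) (B ω)) ^ 2 ≤ u ∧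
      G (max (A ω) (B ω)) ^ 2 ≤ v} =
      {ω | min (G (A ω)) (G (B ω)) ≤ 1 - √(1 - u) ∧ max (G (A ω)) (G (B ω)) ≤ √v} := by
    ext ω
    simp only [mem_ofPred_eq, hG.monotone.map_min, hG.monotone.map_max,
      two_mul_sub_sq_le_iff (min_le_of_left_le (hG.mem_Icc _).2),
      ← Real.le_sqrt (le_max_of_le_left (hG.mem_Icc _).1) hv.1]
  have hGm : Measurable G := hG.2.1.measurable
  rw [hevent, Kcopula_eq_ite hu.1 hv.1]
  exact (hindep.comp hGm hGm).measureReal_min_le_and_max_le_of_cdf_eq_id (hGm.comp hA)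
    (hGm.comp hB) (fun _ => hG.measureReal_comp_le hlaw) (fun _ => hG.measureReal_comp_le hlawB)
    ⟨sub_nonneg.2 (Real.sqrt_le_one.2 (sub_le_self 1 hu.1)),
      sub_le_self _ (Real.sqrt_nonneg _)⟩
    ⟨Real.sqrt_nonneg v, Real.sqrt_le_one.2 hv.2⟩
end
end

section
/- Let X1, X2 be independent real-valued random variables on a probability space (Ω, 𝓕, P) such that X1 ⪯st X2, i.e., their distribution functions satisfy G2(t) ≤ G1(t) for all t ∈ ℝ. Then P(X1 ≤ X2) ≥ 1/2; that is, under independence, the usual stochastic ordering implies stochastic precedence X1 ⪯sp X2. -/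
/-!
By independence, `P(X₁ ≤ X₂) = ∫ G₁(y) dG₂(y)`, and `G₂ ≤ G₁` bounds this from below by
`∫ G₂(y) dG₂(y) = P(X₂ ≤ X₂')` for an independent copy `X₂'` of `X₂`. By symmetry
`P(X₂ ≤ X₂') = P(X₂' ≤ X₂)`, and since the two events cover the whole space, each has
probability at least `1/2`.
-/

open MeasureTheory Set ProbabilityTheory

noncomputable section

namespace MeasureTheory.Measure

variable {α : Type*} [LinearOrder α] [TopologicalSpace α] [OrderClosedTopology α]
  [SecondCountableTopology α] [MeasurableSpace α] [OpensMeasurableSpace α]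

lemma prod_setOf_fst_le_snd (μ ν : Measure α) [SFinite μ] [SFinite ν] :
    μ.prod ν {p | p.1 ≤ p.2} = ∫⁻ y, μ (Iic y) ∂ν :=
  prod_apply_symm measurableSet_le'

lemma one_half_le_prod_self_setOf_fst_le_snd (μ : Measure α) [IsProbabilityMeasure μ] :
    1 / 2 ≤ μ.prod μ {p | p.1 ≤ p.2} := by
  set A : Set (α × α) := {p | p.1 ≤ p.2}
  have hswap : μ.prod μ (Prod.swap ⁻¹' A) = μ.prod μ A :=
    measurePreserving_swap.measure_preimage measurableSet_le'.nullMeasurableSet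
  have hcover : (univ : Set (α × α)) ⊆ A ∪ Prod.swap ⁻¹' A := fun p _ ↦ le_total p.1 p.2
  have hone : 1 ≤ 2 * μ.prod μ A :=
    calc 1 = μ.prod μ univ := measure_univ.symm
      _ ≤ μ.prod μ A + μ.prod μ (Prod.swap ⁻¹' A) :=
        (measure_mono hcover).trans (measure_union_le _ _)
      _ = 2 * μ.prod μ A := by rw [hswap, two_mul]
  rwa [ENNReal.div_le_iff_le_mul (by norm_num) (by norm_num), mul_comm]

lemma one_half_le_prod_setOf_fst_le_snd_of_measure_Iic_le (μ ν : Measure α)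
    [IsProbabilityMeasure μ] [IsProbabilityMeasure ν] (h : ∀ t, ν (Iic t) ≤ μ (Iic t)) :
    1 / 2 ≤ μ.prod ν {p | p.1 ≤ p.2} :=
  calc 1 / 2 ≤ ν.prod ν {p | p.1 ≤ p.2} := one_half_le_prod_self_setOf_fst_le_snd ν
    _ = ∫⁻ y, ν (Iic y) ∂ν := prod_setOf_fst_le_snd ν ν
    _ ≤ ∫⁻ y, μ (Iic y) ∂ν := lintegral_mono h
    _ = μ.prod ν {p | p.1 ≤ p.2} := (prod_setOf_fst_le_snd μ ν).symm

end MeasureTheory.Measure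

/-- If X1, X2 are independent and X1 ⪯st X2 (i.e. P(X2 ≤ t) ≤ P(X1 ≤ t) for
all t), then P(X1 ≤ X2) ≥ 1/2: stochastic ordering implies stochastic precedence under
independence. -/
theorem stmt19 {Ω : Type*} [MeasurableSpace Ω] (P : Measure Ω) [IsProbabilityMeasure P]
    (X1 X2 : Ω → ℝ) (hX1 : Measurable X1) (hX2 : Measurable X2)
    (hindep : IndepFun X1 X2 P)
    (hst : ∀ t : ℝ, P {ω | X2 ω ≤ t} ≤ P {ω | X1 ω ≤ t}) :
    1 / 2 ≤ P {ω | X1 ω ≤ X2 ω} := by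
  have : IsProbabilityMeasure (P.map X1) := Measure.isProbabilityMeasure_map hX1.aemeasurable
  have : IsProbabilityMeasure (P.map X2) := Measure.isProbabilityMeasure_map hX2.aemeasurable
  have hjoint : P.map (fun ω ↦ (X1 ω, X2 ω)) = (P.map X1).prod (P.map X2) :=
    (indepFun_iff_map_prod_eq_prod_map_map hX1.aemeasurable hX2.aemeasurable).1 hindep
  have hcdf : ∀ t, P.map X2 (Iic t) ≤ P.map X1 (Iic t) := fun t ↦ by
    rw [Measure.map_apply hX1 measurableSet_Iic, Measure.map_apply hX2 measurableSet_Iic]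
    exact hst t
  calc 1 / 2 ≤ (P.map X1).prod (P.map X2) {p | p.1 ≤ p.2} :=
        Measure.one_half_le_prod_setOf_fst_le_snd_of_measure_Iic_le _ _ hcdf
    _ = P {ω | X1 ω ≤ X2 ω} := by
        rw [← hjoint, Measure.map_apply (hX1.prodMk hX2) measurableSet_le']
        rfl
end
end
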